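/- Let G be a group with identity e, let M and N be abelian groups, and let μ_M : G → End(M) and μ_N : G → End(N) be functions (not assumed multiplicative) with μ_M(e) = id and μ_N(e) = id. For n ≥ 0 and a function f : Gⁿ → Hom(M,N), define ∇f : G^{n+1} → Hom(M,N) by ∇f(g₁,…,g_{n+1}) = μ_N(g₁)∘f(g₂,…,g_{n+1}) + Σ_{i=1}^{n} (−1)ⁱ f(g₁,…,g_i g_{i+1},…,g_{n+1}) + (−1)^{n+1} f(g₁,…,gₙ)∘μ_M(g_{n+1}). Then for all g₁,…,g_{n+2} ∈ G, ∇(∇f)(g₁,…,g_{n+2}) = (μ_N(g₁)∘μ_N(g₂) − μ_N(g₁g₂))∘f(g₃,…,g_{n+2}) − f(g₁,…,gₙ)∘(μ_M(g_{n+1})∘μ_M(g_{n+2}) − μ_M(g_{n+1}g_{n+2})). -/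

import Mathlib

/-- Given a tuple `(g₁, …, g_{n+1})`, multiply the entries at positions `i+1` and `i+2`
(1-indexed: replace `(…, gᵢ₊₁, gᵢ₊₂, …)` by `(…, gᵢ₊₁·gᵢ₊₂, …)`), producing a tuple of
length `n`. -/
def mergeAt {G : Type*} [Mul G] {n : ℕ} (i : Fin n) (g : Fin (n + 1) → G) : Fin n → G :=
  fun j =>
    if (j : ℕ) < (i : ℕ) then g j.castSucc
    else if (j : ℕ) = (i : ℕ) then g j.castSucc * g j.succ
    else g j.succ

/-- The connection (differential) on inhomogeneous group cochains with values in
`Hom(M, N)`, twisted by the (not necessarily multiplicative) maps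
`μ_M : G → End(M)` and `μ_N : G → End(N)`:
`∇f(g₁,…,g_{n+1}) = μ_N(g₁)∘f(g₂,…,g_{n+1}) + Σᵢ (−1)ⁱ f(g₁,…,gᵢgᵢ₊₁,…,g_{n+1})
  + (−1)^{n+1} f(g₁,…,gₙ)∘μ_M(g_{n+1})`. -/
def nabla {G M N : Type*} [Group G] [AddCommGroup M] [AddCommGroup N]
    (μM : G → (M →+ M)) (μN : G → (N →+ N)) {n : ℕ}
    (f : (Fin n → G) → (M →+ N)) : (Fin (n + 1) → G) → (M →+ N) :=
  fun g =>
    (μN (g 0)).comp (f (fun j => g j.succ))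
    + ∑ i : Fin n, ((-1 : ℤ) ^ ((i : ℕ) + 1)) • f (mergeAt i g)
    + ((-1 : ℤ) ^ (n + 1)) • (f (fun j => g j.castSucc)).comp (μM (g (Fin.last n)))

/-!
`nabla` is the alternating sum of the faces `d₀ = μN(g₀) ∘ -`, `dᵢ₊₁` (multiply `gᵢ` and `gᵢ₊₁`)
and `dₙ₊₁ = - ∘ μM(gₙ)`. These satisfy the cosimplicial identities `dⱼ₊₁ dᵢ = dᵢ dⱼ` for `i ≤ j`
except in the two extreme cases `i = j = 0` and `i = j = n + 1`, where they fail exactly by the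
curvatures of `μN` and `μM`. In `nabla² = ∑ (-1)^(i+j) dⱼ dᵢ` all other terms cancel in pairs,
leaving these two defects.
-/

open Finset

section mergeAt

variable {G : Type*} {n : ℕ} {i j : ℕ}

theorem mergeAt_zero_apply_zero [Mul G] (g : Fin (n + 2) → G) :
    mergeAt ⟨0, n.succ_pos⟩ g 0 = g 0 * g 1 := by
  simp [mergeAt]

theorem tail_mergeAt_zero [Mul G] (g : Fin (n + 2) → G) :
    Fin.tail (mergeAt ⟨0, n.succ_pos⟩ g) = Fin.tail (Fin.tail g) := by
  ext k
  simp [mergeAt, Fin.tail]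

theorem mergeAt_succ_apply_zero [Mul G] (hi : i < n) (g : Fin (n + 2) → G) :
    mergeAt ⟨i + 1, by omega⟩ g 0 = g 0 := by
  simp [mergeAt]

theorem tail_mergeAt_succ [Mul G] (hi : i < n) (g : Fin (n + 2) → G) :
    Fin.tail (mergeAt ⟨i + 1, by omega⟩ g) = mergeAt ⟨i, hi⟩ (Fin.tail g) := by
  ext k
  simp only [Fin.tail, mergeAt, Fin.val_succ, Nat.add_lt_add_iff_right, Nat.add_right_cancel_iff]
  rfl

theorem mergeAt_apply_last [Mul G] (hi : i < n) (g : Fin (n + 2) → G) :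
    mergeAt ⟨i, by omega⟩ g (Fin.last n) = g (Fin.last (n + 1)) := by
  simp only [mergeAt, Fin.val_last]
  rw [if_neg (by omega), if_neg (by omega)]
  rfl

theorem init_mergeAt [Mul G] (hi : i < n) (g : Fin (n + 2) → G) :
    Fin.init (mergeAt ⟨i, by omega⟩ g) = mergeAt ⟨i, hi⟩ (Fin.init g) := by
  ext k
  simp only [Fin.init, mergeAt, Fin.val_castSucc]
  rfl

theorem mergeAt_last_apply_last [Mul G] (g : Fin (n + 2) → G) :
    mergeAt ⟨n, n.lt_succ_self⟩ g (Fin.last n) =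
      g (Fin.last n).castSucc * g (Fin.last (n + 1)) := by
  simp [mergeAt]

theorem init_mergeAt_last [Mul G] (g : Fin (n + 2) → G) :
    Fin.init (mergeAt ⟨n, n.lt_succ_self⟩ g) = Fin.init (Fin.init g) := by
  ext k
  simp [Fin.init, mergeAt]

theorem mergeAt_mergeAt [Semigroup G] (hij : i ≤ j) (hj : j < n) (g : Fin (n + 2) → G) :
    mergeAt ⟨i, by omega⟩ (mergeAt ⟨j + 1, by omega⟩ g) =
      mergeAt ⟨j, hj⟩ (mergeAt ⟨i, by omega⟩ g) := by
  ext k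
  simp only [mergeAt, Fin.val_succ, Fin.val_castSucc]
  split_ifs <;> first | rfl | omega | (rw [mul_assoc]; rfl)

end mergeAt

section AlternatingDoubleSum

variable {V : Type*} [AddCommGroup V]

theorem sum_range_sum_range_neg_one_pow_smul_eq_sum_le (m : ℕ) (F : ℕ → ℕ → V) :
    ∑ j ∈ range (m + 2), ∑ i ∈ range (m + 1), (-1 : ℤ) ^ (i + j) • F j i =
      ∑ p ∈ (range (m + 1) ×ˢ range (m + 1)).filter (fun p => p.1 ≤ p.2),
        (-1 : ℤ) ^ (p.1 + p.2) • (F p.1 p.2 - F (p.2 + 1) p.1) := by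
  rw [← sum_product', ← sum_filter_add_sum_filter_not _ (fun p => p.2 < p.1)]
  have below : ∑ p ∈ (range (m + 2) ×ˢ range (m + 1)).filter (fun p => p.2 < p.1),
        (-1 : ℤ) ^ (p.2 + p.1) • F p.1 p.2 =
      -∑ p ∈ (range (m + 1) ×ˢ range (m + 1)).filter (fun p => p.1 ≤ p.2),
        (-1 : ℤ) ^ (p.1 + p.2) • F (p.2 + 1) p.1 := by
    rw [← sum_neg_distrib]
    refine sum_nbij' (fun p => (p.2, p.1 - 1)) (fun p => (p.2 + 1, p.1)) ?_ ?_ ?_ ?_ ?_ <;>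
      simp only [Prod.forall, mem_filter, mem_product, mem_range, Prod.mk.injEq, true_and, and_true]
    any_goals omega
    rintro (_ | j) i ⟨-, hij⟩
    · omega
    · rw [Nat.add_sub_cancel, ← add_assoc, pow_succ, mul_neg_one, neg_smul]
  have above : ∑ p ∈ (range (m + 2) ×ˢ range (m + 1)).filter (fun p => ¬p.2 < p.1),
        (-1 : ℤ) ^ (p.2 + p.1) • F p.1 p.2 =
      ∑ p ∈ (range (m + 1) ×ˢ range (m + 1)).filter (fun p => p.1 ≤ p.2),
        (-1 : ℤ) ^ (p.1 + p.2) • F p.1 p.2 := by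
    refine sum_congr ?_ fun p _ => by rw [add_comm]
    ext p
    simp only [mem_filter, mem_product, mem_range]
    omega
  rw [below, above, neg_add_eq_sub, ← sum_sub_distrib]
  simp only [smul_sub]

theorem sum_range_sum_range_neg_one_pow_smul_of_comm {m : ℕ} (hm : 0 < m) (F : ℕ → ℕ → V)
    (hF : ∀ i j, i ≤ j → 0 < j → i < m → j ≤ m → F (j + 1) i = F i j) :
    ∑ j ∈ range (m + 2), ∑ i ∈ range (m + 1), (-1 : ℤ) ^ (i + j) • F j i =
      (F 0 0 - F 1 0) + (F m m - F (m + 1) m) := by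
  rw [sum_range_sum_range_neg_one_pow_smul_eq_sum_le,
    sum_eq_add_of_mem (0, 0) (m, m) (by simp) (by simp) (by simp [hm.ne])]
  · simp [Even.neg_one_pow ⟨m, rfl⟩]
  · rintro ⟨i, j⟩ hij ⟨hne_zero, hne_last⟩
    simp only [mem_filter, mem_product, mem_range] at hij
    rw [hF i j hij.2 (by grind) (by grind) (by omega), sub_self, smul_zero]

end AlternatingDoubleSum

section Face

variable {G M N : Type*} [AddCommGroup M] [AddCommGroup N]
  (μM : G → (M →+ M)) (μN : G → (N →+ N)) {n : ℕ}

def face [Mul G] (i : ℕ) : ((Fin n → G) → (M →+ N)) →+ ((Fin (n + 1) → G) → (M →+ N)) where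
  toFun f g :=
    if hi : i = 0 then (μN (g 0)).comp (f (Fin.tail g))
    else if h : i ≤ n then f (mergeAt ⟨i - 1, by omega⟩ g)
    else (f (Fin.init g)).comp (μM (g (Fin.last n)))
  map_zero' := by
    ext g
    split_ifs <;> simp
  map_add' f f' := by
    ext g
    split_ifs <;> simp

variable (f : (Fin n → G) → (M →+ N))

theorem face_zero_apply [Mul G] (g : Fin (n + 1) → G) :
    face μM μN 0 f g = (μN (g 0)).comp (f (Fin.tail g)) := by
  simp [face]

theorem face_succ_apply [Mul G] {i : ℕ} (hi : i < n) (g : Fin (n + 1) → G) :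
    face μM μN (i + 1) f g = f (mergeAt ⟨i, hi⟩ g) := by
  simp [face, hi]

theorem face_last_apply [Mul G] (g : Fin (n + 1) → G) :
    face μM μN (n + 1) f g = (f (Fin.init g)).comp (μM (g (Fin.last n))) := by
  simp [face]

theorem face_face [Semigroup G] {i j : ℕ} (hij : i ≤ j) (hj : 0 < j) (hi : i < n + 1)
    (hjn : j ≤ n + 1) :
    face μM μN (j + 1) (face μM μN i f) = face μM μN i (face μM μN j f) := by
  ext g : 1
  obtain ⟨j, rfl⟩ : ∃ k, j = k + 1 := ⟨j - 1, by omega⟩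
  rcases i with _ | i
  · rcases (show j < n ∨ j = n by omega) with hjn | rfl
    · rw [face_succ_apply _ _ _ (by omega), face_zero_apply, face_zero_apply,
        face_succ_apply _ _ _ hjn, tail_mergeAt_succ hjn, mergeAt_succ_apply_zero hjn]
    · rw [face_last_apply, face_zero_apply, face_zero_apply, face_last_apply,
        Fin.tail_init_eq_init_tail, AddMonoidHom.comp_assoc]
      rfl
  · rcases (show j < n ∨ j = n by omega) with hjn | rfl
    · rw [face_succ_apply _ _ _ (by omega), face_succ_apply _ _ _ (by omega),
        face_succ_apply _ _ _ (by omega), face_succ_apply _ _ _ hjn,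
        mergeAt_mergeAt (by omega) hjn]
    · rw [face_last_apply, face_succ_apply _ _ _ (by omega), face_succ_apply _ _ _ (by omega),
        face_last_apply, init_mergeAt (by omega), mergeAt_apply_last (by omega)]

theorem face_zero_face_zero_sub_face_one_face_zero [Mul G] (g : Fin (n + 2) → G) :
    face μM μN 0 (face μM μN 0 f) g - face μM μN 1 (face μM μN 0 f) g =
      ((μN (g 0)).comp (μN (g 1)) - μN (g 0 * g 1)).comp (f (Fin.tail (Fin.tail g))) := by
  rw [face_zero_apply, face_zero_apply, face_succ_apply _ _ _ n.succ_pos, face_zero_apply,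
    mergeAt_zero_apply_zero, tail_mergeAt_zero, AddMonoidHom.sub_comp, AddMonoidHom.comp_assoc]
  rfl

theorem face_last_face_last_sub_face_succ_last_face_last [Mul G] (g : Fin (n + 2) → G) :
    face μM μN (n + 1) (face μM μN (n + 1) f) g - face μM μN (n + 2) (face μM μN (n + 1) f) g =
      -(f (Fin.init (Fin.init g))).comp ((μM (g (Fin.last n).castSucc)).comp
        (μM (g (Fin.last (n + 1)))) - μM (g (Fin.last n).castSucc * g (Fin.last (n + 1)))) := by
  rw [face_succ_apply _ _ _ n.lt_succ_self, face_last_apply, face_last_apply, face_last_apply,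
    init_mergeAt_last, mergeAt_last_apply_last, AddMonoidHom.comp_sub, AddMonoidHom.comp_assoc,
    neg_sub]
  rfl

theorem nabla_eq_sum_face [Group G] :
    nabla μM μN f = ∑ i ∈ range (n + 2), (-1 : ℤ) ^ i • face μM μN i f := by
  ext g : 1
  rw [sum_range_succ, sum_range_succ', ← Fin.sum_univ_eq_sum_range]
  simp only [nabla, Pi.add_apply, Finset.sum_apply, Pi.smul_apply, face_zero_apply,
    face_succ_apply _ _ _ (Fin.isLt _), Fin.eta, face_last_apply, pow_zero, one_smul]
  rw [add_comm (∑ _, _)]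
  rfl

theorem nabla_nabla_eq_sum [Group G] :
    nabla μM μN (nabla μM μN f) = ∑ j ∈ range (n + 3), ∑ i ∈ range (n + 2),
      (-1 : ℤ) ^ (i + j) • face μM μN j (face μM μN i f) := by
  simp only [nabla_eq_sum_face, map_sum, map_zsmul, smul_sum, smul_smul, ← pow_add, add_comm]

end Face

theorem nabla_sq_general {G M N : Type*} [Group G] [AddCommGroup M] [AddCommGroup N]
    (μM : G → (M →+ M)) (μN : G → (N →+ N))
    {n : ℕ} (f : (Fin n → G) → (M →+ N)) (g : Fin (n + 2) → G) :
    nabla μM μN (nabla μM μN f) g =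
      ((μN (g 0)).comp (μN (g 1)) - μN (g 0 * g 1)).comp
        (f (fun j => g j.succ.succ))
      - (f (fun j => g j.castSucc.castSucc)).comp
          ((μM (g (Fin.castSucc (Fin.last n)))).comp (μM (g (Fin.last (n + 1))))
            - μM (g (Fin.castSucc (Fin.last n)) * g (Fin.last (n + 1)))) := by
  rw [nabla_nabla_eq_sum]
  simp only [Finset.sum_apply, Pi.smul_apply]
  rw [sum_range_sum_range_neg_one_pow_smul_of_comm n.succ_pos _
      fun i j hij hj hi hjn => congrFun (face_face μM μN f hij hj hi hjn) g,
    face_zero_face_zero_sub_face_one_face_zero, face_last_face_last_sub_face_succ_last_face_last,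
    ← sub_eq_add_neg]
  rfl

/-- If `μ_M(e) = id` and `μ_N(e) = id`, then the square of the
connection `∇` on group cochains is given by commutation with the curvatures
`R(g,h) = μ(g)∘μ(h) − μ(gh)`:
`∇²f(g₁,…,g_{n+2}) = (μ_N(g₁)∘μ_N(g₂) − μ_N(g₁g₂))∘f(g₃,…,g_{n+2})
  − f(g₁,…,gₙ)∘(μ_M(g_{n+1})∘μ_M(g_{n+2}) − μ_M(g_{n+1}g_{n+2}))`. -/
theorem nabla_sq {G M N : Type*} [Group G] [AddCommGroup M] [AddCommGroup N]
    (μM : G → (M →+ M)) (μN : G → (N →+ N))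
    (hM : μM 1 = AddMonoidHom.id M) (hN : μN 1 = AddMonoidHom.id N)
    {n : ℕ} (f : (Fin n → G) → (M →+ N)) (g : Fin (n + 2) → G) :
    nabla μM μN (nabla μM μN f) g =
      ((μN (g 0)).comp (μN (g 1)) - μN (g 0 * g 1)).comp
        (f (fun j => g j.succ.succ))
      - (f (fun j => g j.castSucc.castSucc)).comp
          ((μM (g (Fin.castSucc (Fin.last n)))).comp (μM (g (Fin.last (n + 1))))
            - μM (g (Fin.castSucc (Fin.last n)) * g (Fin.last (n + 1)))) :=
  nabla_sq_general μM μN f g
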